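/- arXiv:1305.6288 — 2 statements merged into one kernel-verified Lean document; each statement's English description precedes it below -/
import Mathlib

section
/- Let n ≥ 3 and let N be a smooth and symmetric norm on ℝ^n. Then there exists R > 1 such that for every norm M on ℝ^n satisfying M(x) ≤ N(x) ≤ R·M(x) for all x ∈ ℝ^n, there exist n points in ℝ^n that are pairwise equidistant with respect to M; that is, the equilateral dimension of every normed space within Banach–Mazur distance R of (ℝ^n, N) is at least n. -/
/-- `N` is a norm on `ℝ^n`. -/
def IsNorm {n : ℕ} (N : (Fin n → ℝ) → ℝ) : Prop :=
  (∀ x, N x = 0 ↔ x = 0) ∧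
  (∀ (c : ℝ) (x : Fin n → ℝ), N (c • x) = |c| * N x) ∧
  (∀ x y : Fin n → ℝ, N (x + y) ≤ N x + N y)

/-- `N` is permutation-invariant. -/
def PermInvariant {n : ℕ} (N : (Fin n → ℝ) → ℝ) : Prop :=
  ∀ (σ : Equiv.Perm (Fin n)) (x : Fin n → ℝ), N (fun i => x (σ i)) = N x

/-- `N` is 1-unconditional. -/
def Unconditional {n : ℕ} (N : (Fin n → ℝ) → ℝ) : Prop :=
  ∀ ε : Fin n → ℝ, (∀ i, ε i = 1 ∨ ε i = -1) →
    ∀ x : Fin n → ℝ, N (fun i => ε i * x i) = N x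

/-- `N` is smooth: at every point of the unit sphere there is exactly one
supporting functional. -/
def SmoothNorm {n : ℕ} (N : (Fin n → ℝ) → ℝ) : Prop :=
  ∀ x : Fin n → ℝ, N x = 1 →
    ∃! f : (Fin n → ℝ) →ₗ[ℝ] ℝ, f x = 1 ∧ ∀ y : Fin n → ℝ, N y ≤ 1 → f y ≤ 1

/-!
Let `c = N (eᵢ - eⱼ)`, the same for all `i ≠ j`. Averaging over the transposition `(i j)` shows
that `φᵢⱼ x = (c / 2) (xᵢ - xⱼ)` is dominated by `N`; it attains `N` at `eᵢ - eⱼ`, so by smoothness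
it is the only such functional. By compactness of the dominated functionals, every functional
supporting a norm `M` with `(1 - γ) N ≤ M ≤ N` at a point near `eᵢ - eⱼ` is then close to `φᵢⱼ`,
uniformly in `M`, so near `eᵢ - eⱼ` every such `M` is approximately linear with derivative `φᵢⱼ`.
Look for the equilateral set among the points `pᵢ = eᵢ - c⁻¹ tᵢ` with `t` symmetric with zero
diagonal: then `φᵢⱼ (pᵢ - pⱼ) = c + tᵢⱼ`, so `t ↦ t + d - M (pᵢ - pⱼ)` is a contraction of a small
ball, and its fixed point satisfies `M (pᵢ - pⱼ) = d`.
-/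

open Set Filter Topology Metric
open scoped NNReal

variable {n : ℕ}

namespace IsNorm

variable {N : (Fin n → ℝ) → ℝ}

def toSeminorm (hN : IsNorm N) : Seminorm ℝ (Fin n → ℝ) :=
  Seminorm.of N hN.2.2 fun a x => by rw [hN.2.1, Real.norm_eq_abs]

lemma nonneg (hN : IsNorm N) (x : Fin n → ℝ) : 0 ≤ N x :=
  apply_nonneg hN.toSeminorm x

lemma pos (hN : IsNorm N) {x : Fin n → ℝ} (hx : x ≠ 0) : 0 < N x :=
  (hN.nonneg x).lt_of_ne' fun h => hx ((hN.1 x).1 h)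

lemma neg (hN : IsNorm N) (x : Fin n → ℝ) : N (-x) = N x :=
  map_neg_eq_map hN.toSeminorm x

lemma sub_le (hN : IsNorm N) (x y : Fin n → ℝ) : N x - N y ≤ N (x - y) :=
  (le_abs_self _).trans (abs_sub_map_le_sub hN.toSeminorm x y)

lemma exists_le_mul_norm (hN : IsNorm N) : ∃ L, 0 ≤ L ∧ ∀ x, N x ≤ L * ‖x‖ := by
  classical
  refine ⟨∑ m, N (Pi.single m 1), Finset.sum_nonneg fun m _ => hN.nonneg _, fun x => ?_⟩
  calc N x = N (∑ m, x m • Pi.single m 1) := by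
        simp_rw [← Pi.single_smul', smul_eq_mul, mul_one, Finset.univ_sum_single]
    _ ≤ ∑ m, N (x m • Pi.single m 1) :=
        Finset.le_sum_of_subadditive N ((hN.1 0).2 rfl).le hN.2.2 _ _
    _ ≤ ∑ m, N (Pi.single m 1) * ‖x‖ := Finset.sum_le_sum fun m _ => by
        rw [hN.2.1, mul_comm, ← Real.norm_eq_abs]
        exact mul_le_mul_of_nonneg_left (norm_le_pi_norm x m) (hN.nonneg _)
    _ = (∑ m, N (Pi.single m 1)) * ‖x‖ := (Finset.sum_mul ..).symm

lemma exists_le_apply_eq (hN : IsNorm N) (v : Fin n → ℝ) :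
    ∃ g : (Fin n → ℝ) →L[ℝ] ℝ, (∀ z, g z ≤ N z) ∧ g v = N v := by
  rcases eq_or_ne v 0 with rfl | hv
  · exact ⟨0, hN.nonneg, by simp [(hN.1 0).2 rfl]⟩
  obtain ⟨g, hgv, hgN⟩ := exists_extension_of_le_sublinear
    (LinearPMap.mkSpanSingleton v (N v) hv) N (fun c hc x => by rw [hN.2.1, abs_of_pos hc])
    hN.2.2 fun ⟨x, hx⟩ => by
      obtain ⟨c, rfl⟩ := Submodule.mem_span_singleton.1 hx
      rw [LinearPMap.mkSpanSingleton'_apply, hN.2.1, smul_eq_mul]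
      exact mul_le_mul_of_nonneg_right (le_abs_self c) (hN.nonneg v)
  refine ⟨LinearMap.toContinuousLinearMap g, hgN, ?_⟩
  rw [LinearMap.coe_toContinuousLinearMap', hgv ⟨v, Submodule.mem_span_singleton_self v⟩,
    LinearPMap.mkSpanSingleton_apply]

lemma norm_le_of_le (hN : IsNorm N) {L : ℝ} (hL0 : 0 ≤ L) (hL : ∀ x, N x ≤ L * ‖x‖)
    {g : (Fin n → ℝ) →L[ℝ] ℝ} (hg : ∀ z, g z ≤ N z) : ‖g‖ ≤ L :=
  g.opNorm_le_bound hL0 fun z => by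
    rw [Real.norm_eq_abs, abs_le]
    constructor <;> linarith [hg (-z), hN.neg z, hL z, map_neg g z, hg z]

lemma isCompact_setOf_le (hN : IsNorm N) :
    IsCompact {g : (Fin n → ℝ) →L[ℝ] ℝ | ∀ z, g z ≤ N z} := by
  obtain ⟨L, hL0, hL⟩ := hN.exists_le_mul_norm
  refine isCompact_of_isClosed_isBounded ?_
    ((isBounded_closedBall (x := 0) (r := L)).subset fun g hg => ?_)
  · simp only [Set.ofPred_forall]
    exact isClosed_iInter fun z => isClosed_le (continuous_eval_const z) continuous_const
  · exact mem_closedBall_zero_iff.2 (hN.norm_le_of_le hL0 hL hg)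

end IsNorm

lemma IsCompact.exists_pos_forall_sub_lt_imp_mem {X : Type*} [TopologicalSpace X] {K U : Set X}
    {F : X → ℝ} {m : ℝ} (hK : IsCompact K) (hU : IsOpen U) (hF : ContinuousOn F K)
    (hlt : ∀ x ∈ K \ U, F x < m) : ∃ ε > 0, ∀ x ∈ K, m - ε < F x → x ∈ U := by
  rcases (K \ U).eq_empty_or_nonempty with hempty | hne
  · exact ⟨1, one_pos, fun x hxK _ => by_contra fun hxU => hempty.subset ⟨hxK, hxU⟩⟩
  obtain ⟨y, hy, hmax⟩ := (hK.diff hU).exists_isMaxOn hne (hF.mono sdiff_subset)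
  refine ⟨m - F y, sub_pos.2 (hlt y hy), fun x hxK hx => by_contra fun hxU => ?_⟩
  linarith [isMaxOn_iff.1 hmax x ⟨hxK, hxU⟩]

namespace IsNorm

variable {N M : (Fin n → ℝ) → ℝ} {x₀ : Fin n → ℝ} {f : (Fin n → ℝ) →L[ℝ] ℝ}

lemma eventually_norm_sub_lt (hN : IsNorm N)
    (hf : ∀ g : (Fin n → ℝ) →L[ℝ] ℝ, (∀ z, g z ≤ N z) → g x₀ = N x₀ → g = f)
    {η : ℝ} (hη : 0 < η) :
    ∀ᶠ γ in 𝓝[>] 0, ∀ g : (Fin n → ℝ) →L[ℝ] ℝ, (∀ z, g z ≤ N z) →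
      ∀ u ∈ closedBall x₀ γ, (1 - γ) * N u ≤ g u → ‖g - f‖ < η := by
  obtain ⟨L, hL0, hL⟩ := hN.exists_le_mul_norm
  obtain ⟨ε, hε, hεf⟩ := hN.isCompact_setOf_le.exists_pos_forall_sub_lt_imp_mem (U := ball f η)
    isOpen_ball (continuous_eval_const x₀).continuousOn fun g ⟨hg, hgf⟩ =>
      (hg x₀).lt_of_ne fun hgx => hgf (by rw [hf g hg hgx]; exact mem_ball_self hη)
  have hsmall : ∀ᶠ γ in 𝓝 (0 : ℝ), γ ≤ 1 ∧ γ * (N x₀ + 2 * L) < ε :=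
    (eventually_le_nhds one_pos).and <|
      ((continuous_mul_const _).tendsto' 0 0 (zero_mul _)).eventually_lt_const hε
  filter_upwards [nhdsWithin_le_nhds hsmall] with γ ⟨hγ1, hγε⟩ g hg u hu hgu
  rw [← dist_eq_norm]
  refine hεf g hg ?_
  rw [mem_closedBall, dist_eq_norm] at hu
  have hNu : N x₀ - N u ≤ L * γ := (hN.sub_le x₀ u).trans <|
    (hL _).trans (mul_le_mul_of_nonneg_left (by rwa [norm_sub_rev]) hL0)
  have hgux := (g.le_of_opNorm_le (hN.norm_le_of_le hL0 hL hg) (u - x₀)).trans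
    (mul_le_mul_of_nonneg_left hu hL0)
  rw [Real.norm_eq_abs, map_sub] at hgux
  have hgx₀ : g u - g x₀ ≤ L * γ := (abs_le.1 hgux).2
  -- `g x₀ ≥ g u - L γ ≥ (1 - γ) (N x₀ - L γ) - L γ ≥ N x₀ - γ (N x₀ + 2 L)`
  show N x₀ - ε < g x₀
  nlinarith [mul_nonneg (sub_nonneg.2 hγ1) (by linarith : 0 ≤ N u - N x₀ + L * γ),
    mul_nonneg (sq_nonneg γ) hL0]

lemma approximatesLinearOn (hM : IsNorm M) {s : Set (Fin n → ℝ)} {η : ℝ≥0}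
    (hs : ∀ u ∈ s, ∀ g : (Fin n → ℝ) →L[ℝ] ℝ, (∀ z, g z ≤ M z) → g u = M u → ‖g - f‖ ≤ η) :
    ApproximatesLinearOn M f s η := by
  intro u hu u' hu'
  obtain ⟨g, hgM, hgu⟩ := hM.exists_le_apply_eq u
  obtain ⟨g', hg'M, hg'u'⟩ := hM.exists_le_apply_eq u'
  have hg := (g - f).le_of_opNorm_le (hs u hu g hgM hgu) (u - u')
  have hg' := (g' - f).le_of_opNorm_le (hs u' hu' g' hg'M hg'u') (u - u')
  simp only [Real.norm_eq_abs, sub_apply, map_sub] at hg hg' ⊢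
  rw [abs_le] at hg hg' ⊢
  constructor <;> linarith [hgM u', hg'M u]

lemma eventually_approximatesLinearOn (hN : IsNorm N)
    (hf : ∀ g : (Fin n → ℝ) →L[ℝ] ℝ, (∀ z, g z ≤ N z) → g x₀ = N x₀ → g = f)
    {η : ℝ≥0} (hη : 0 < η) :
    ∀ᶠ γ in 𝓝[>] 0, ∀ M, IsNorm M → (∀ x, M x ≤ N x) → (∀ x, (1 - γ) * N x ≤ M x) →
      ApproximatesLinearOn M f (closedBall x₀ γ) η := by
  filter_upwards [hN.eventually_norm_sub_lt hf hη] with γ hγ M hM hMN hNM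
  exact hM.approximatesLinearOn fun u hu g hg hgu =>
    (hγ g (fun z => (hg z).trans (hMN z)) u hu (hgu ▸ hNM u)).le

end IsNorm

def coordDiff (i j : Fin n) : (Fin n → ℝ) →L[ℝ] ℝ :=
  ContinuousLinearMap.proj (R := ℝ) (φ := fun _ => ℝ) i - ContinuousLinearMap.proj j

@[simp]
lemma coordDiff_apply (i j : Fin n) (x : Fin n → ℝ) : coordDiff i j x = x i - x j := by
  simp [coordDiff]

lemma Pi.single_sub_single_ne_zero {i j : Fin n} (hij : i ≠ j) :
    (Pi.single i 1 - Pi.single j 1 : Fin n → ℝ) ≠ 0 :=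
  sub_ne_zero.2 fun h => hij (by simpa [Pi.single_apply] using (congrFun h i).symm)

lemma Equiv.Perm.exists_apply_eq_apply_eq {α : Type*} [DecidableEq α] {i j k l : α}
    (hij : i ≠ j) (hkl : k ≠ l) : ∃ σ : Equiv.Perm α, σ k = i ∧ σ l = j := by
  set τ := Equiv.swap k i
  have hτl : τ l ≠ i := fun h =>
    hkl (τ.injective (h.trans (Equiv.swap_apply_left k i).symm)).symm
  refine ⟨τ.trans (Equiv.swap (τ l) j), ?_, Equiv.swap_apply_left _ _⟩
  simp only [Equiv.trans_apply, τ, Equiv.swap_apply_left]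
  exact Equiv.swap_apply_of_ne_of_ne hτl.symm hij

namespace PermInvariant

variable {N : (Fin n → ℝ) → ℝ}

lemma apply_single_sub_single (hperm : PermInvariant N) {i j k l : Fin n} (hij : i ≠ j)
    (hkl : k ≠ l) : N (Pi.single i 1 - Pi.single j 1) = N (Pi.single k 1 - Pi.single l 1) := by
  obtain ⟨σ, rfl, rfl⟩ := Equiv.Perm.exists_apply_eq_apply_eq hij hkl
  rw [← hperm σ]
  congr 1
  ext m
  simp [Pi.single_apply]

lemma exists_pos_forall_apply_single_sub_single_eq (hperm : PermInvariant N) (hN : IsNorm N)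
    (hn : 2 ≤ n) : ∃ c > 0, ∀ i j : Fin n, i ≠ j → N (Pi.single i 1 - Pi.single j 1) = c := by
  have h01 : (⟨0, by omega⟩ : Fin n) ≠ ⟨1, by omega⟩ := by simp
  exact ⟨_, hN.pos (Pi.single_sub_single_ne_zero h01),
    fun i j hij => hperm.apply_single_sub_single hij h01⟩

lemma mul_coordDiff_le (hperm : PermInvariant N) (hN : IsNorm N) (i j : Fin n)
    (x : Fin n → ℝ) : N (Pi.single i 1 - Pi.single j 1) / 2 * coordDiff i j x ≤ N x := by
  set xσ : Fin n → ℝ := fun m => x (Equiv.swap i j m)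
  have hproj :
      (2 : ℝ)⁻¹ • (x + -xσ) = ((x i - x j) / 2) • (Pi.single i 1 - Pi.single j 1) := by
    ext m
    simp only [xσ, Pi.smul_apply, Pi.add_apply, Pi.neg_apply, Pi.sub_apply, Pi.single_apply,
      Equiv.swap_apply_def, smul_eq_mul]
    split_ifs <;> simp_all <;> ring
  calc N (Pi.single i 1 - Pi.single j 1) / 2 * coordDiff i j x
      ≤ |(x i - x j) / 2| * N (Pi.single i 1 - Pi.single j 1) := by
        rw [coordDiff_apply]
        linarith [mul_le_mul_of_nonneg_right (le_abs_self ((x i - x j) / 2)) (hN.nonneg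
          (Pi.single i 1 - Pi.single j 1))]
    _ = 2⁻¹ * N (x + -xσ) := by
        rw [← hN.2.1, ← hproj, hN.2.1, abs_of_pos (by norm_num : (0 : ℝ) < 2⁻¹)]
    _ ≤ 2⁻¹ * (N x + N (-xσ)) := by gcongr; exact hN.2.2 _ _
    _ = N x := by rw [hN.neg, hperm]; ring

end PermInvariant

lemma SmoothNorm.eq_of_le_of_apply_eq {N : (Fin n → ℝ) → ℝ} (hsmooth : SmoothNorm N)
    (hN : IsNorm N) {x : Fin n → ℝ} (hx : x ≠ 0) {g g' : (Fin n → ℝ) →ₗ[ℝ] ℝ}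
    (hg : ∀ z, g z ≤ N z) (hg' : ∀ z, g' z ≤ N z) (hgx : g x = N x) (hg'x : g' x = N x) :
    g = g' := by
  have hNx := hN.pos hx
  have hunit : N ((N x)⁻¹ • x) = 1 := by
    rw [hN.2.1, abs_inv, abs_of_pos hNx, inv_mul_cancel₀ hNx.ne']
  have hsupp : ∀ f : (Fin n → ℝ) →ₗ[ℝ] ℝ, (∀ z, f z ≤ N z) → f x = N x →
      f ((N x)⁻¹ • x) = 1 ∧ ∀ y, N y ≤ 1 → f y ≤ 1 := fun f hf hfx =>
    ⟨by rw [map_smul, hfx, smul_eq_mul, inv_mul_cancel₀ hNx.ne'], fun y hy => (hf y).trans hy⟩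
  exact (hsmooth _ hunit).unique (hsupp g hg hgx) (hsupp g' hg' hg'x)

lemma SmoothNorm.eq_smul_coordDiff {N : (Fin n → ℝ) → ℝ} (hsmooth : SmoothNorm N)
    (hN : IsNorm N) (hperm : PermInvariant N) {i j : Fin n} (hij : i ≠ j)
    {g : (Fin n → ℝ) →L[ℝ] ℝ} (hg : ∀ z, g z ≤ N z)
    (hgx : g (Pi.single i 1 - Pi.single j 1) = N (Pi.single i 1 - Pi.single j 1)) :
    g = (N (Pi.single i 1 - Pi.single j 1) / 2) • coordDiff i j := by
  refine ContinuousLinearMap.coe_injective <| hsmooth.eq_of_le_of_apply_eq hN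
    (Pi.single_sub_single_ne_zero hij) hg (fun z => hperm.mul_coordDiff_le hN i j z) hgx ?_
  simp [hij, hij.symm]
  ring

lemma SmoothNorm.eventually_approximatesLinearOn_coordDiff {N : (Fin n → ℝ) → ℝ}
    (hsmooth : SmoothNorm N) (hN : IsNorm N) (hperm : PermInvariant N) {c : ℝ}
    (hNc : ∀ i j : Fin n, i ≠ j → N (Pi.single i 1 - Pi.single j 1) = c) {η : ℝ≥0} (hη : 0 < η) :
    ∀ᶠ γ in 𝓝[>] 0, ∀ i j : Fin n, i ≠ j → ∀ M, IsNorm M → (∀ x, M x ≤ N x) →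
      (∀ x, (1 - γ) * N x ≤ M x) →
      ApproximatesLinearOn M ((c / 2) • coordDiff i j)
        (closedBall (Pi.single i 1 - Pi.single j 1) γ) η := by
  simp only [eventually_all]
  refine fun i j hij => hN.eventually_approximatesLinearOn (fun g hg hgx => ?_) hη
  rw [← hNc i j hij]
  exact hsmooth.eq_smul_coordDiff hN hperm hij hg hgx

lemma exists_isFixedPt_of_lipschitzOnWith {α : Type*} [MetricSpace α] [CompleteSpace α]
    {s : Set α} (hs : IsClosed s) {x : α} (hx : x ∈ s) {f : α → α} (hmaps : MapsTo f s s)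
    {K : ℝ≥0} (hK : K < 1) (hf : LipschitzOnWith K f s) : ∃ y ∈ s, Function.IsFixedPt f y := by
  obtain ⟨y, hy, hfy, -⟩ := ContractingWith.exists_fixedPoint' hs.isComplete hmaps
    ⟨hK, hf.mapsToRestrict hmaps⟩ hx (edist_ne_top _ _)
  exact ⟨y, hy, hfy⟩

section Perturbation

variable {c : ℝ}

def hollowSymmBall (n : ℕ) (ρ : ℝ) : Set (Fin n → Fin n → ℝ) :=
  {t | (∀ i j, t i j = t j i) ∧ (∀ i, t i i = 0) ∧ ‖t‖ ≤ ρ}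

lemma isClosed_hollowSymmBall (ρ : ℝ) : IsClosed (hollowSymmBall n ρ) := by
  simp only [hollowSymmBall, Set.ofPred_and, Set.ofPred_forall]
  exact (isClosed_iInter fun i => isClosed_iInter fun j =>
    isClosed_eq (by fun_prop) (by fun_prop)).inter
      ((isClosed_iInter fun i => isClosed_eq (by fun_prop) (by fun_prop)).inter
        (isClosed_le continuous_norm continuous_const))

lemma zero_mem_hollowSymmBall {ρ : ℝ} (hρ : 0 ≤ ρ) : 0 ∈ hollowSymmBall n ρ :=
  ⟨fun _ _ => rfl, fun _ => rfl, by simpa using hρ⟩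

noncomputable def perturbedVertex (c : ℝ) (t : Fin n → Fin n → ℝ) (i : Fin n) : Fin n → ℝ :=
  Pi.single i 1 - c⁻¹ • t i

lemma perturbedVertex_zero (i : Fin n) : perturbedVertex c 0 i = Pi.single i 1 := by
  simp [perturbedVertex]

lemma perturbedVertex_sub_sub (t t' : Fin n → Fin n → ℝ) (i j : Fin n) :
    perturbedVertex c t i - perturbedVertex c t j
      - (perturbedVertex c t' i - perturbedVertex c t' j) = -c⁻¹ • ((t - t') i - (t - t') j) := by
  simp only [perturbedVertex, Pi.sub_apply]
  module

lemma norm_perturbedVertex_sub_sub_le (hc : 0 < c) (t t' : Fin n → Fin n → ℝ) (i j : Fin n) :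
    ‖perturbedVertex c t i - perturbedVertex c t j
      - (perturbedVertex c t' i - perturbedVertex c t' j)‖ ≤ 2 / c * ‖t - t'‖ := by
  rw [perturbedVertex_sub_sub, norm_smul, norm_neg, norm_inv, Real.norm_of_nonneg hc.le]
  calc c⁻¹ * ‖(t - t') i - (t - t') j‖ ≤ c⁻¹ * (‖t - t'‖ + ‖t - t'‖) := by
        gcongr
        exact (norm_sub_le _ _).trans (add_le_add (norm_le_pi_norm _ i) (norm_le_pi_norm _ j))
    _ = 2 / c * ‖t - t'‖ := by ring

lemma perturbedVertex_sub_mem_closedBall (hc : 0 < c) {r : ℝ} {t : Fin n → Fin n → ℝ}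
    (ht : ‖t‖ ≤ c * r / 2) (i j : Fin n) :
    perturbedVertex c t i - perturbedVertex c t j
      ∈ closedBall (Pi.single i 1 - Pi.single j 1) r := by
  rw [mem_closedBall, dist_eq_norm, ← perturbedVertex_zero (c := c) i, ← perturbedVertex_zero j]
  refine (norm_perturbedVertex_sub_sub_le hc t 0 i j).trans ?_
  rw [sub_zero]
  calc 2 / c * ‖t‖ ≤ 2 / c * (c * r / 2) := by gcongr
    _ = r := by field_simp

lemma coordDiff_perturbedVertex_sub_sub {t t' : Fin n → Fin n → ℝ} (hc : c ≠ 0)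
    (ht : ∀ i j, t i j = t j i) (ht0 : ∀ i, t i i = 0)
    (ht' : ∀ i j, t' i j = t' j i) (ht'0 : ∀ i, t' i i = 0) (i j : Fin n) :
    c / 2 * coordDiff i j (perturbedVertex c t i - perturbedVertex c t j
      - (perturbedVertex c t' i - perturbedVertex c t' j)) = t i j - t' i j := by
  rw [perturbedVertex_sub_sub]
  simp only [coordDiff_apply, Pi.smul_apply, Pi.sub_apply, smul_eq_mul, ht0, ht'0, ht j i, ht' j i]
  field_simp
  ring

noncomputable def equidistanceStep (M : (Fin n → ℝ) → ℝ) (c d : ℝ) (t : Fin n → Fin n → ℝ) :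
    Fin n → Fin n → ℝ :=
  fun i j => if i = j then 0 else t i j + d - M (perturbedVertex c t i - perturbedVertex c t j)

variable {M : (Fin n → ℝ) → ℝ} {d r : ℝ} {η : ℝ≥0}

lemma dist_equidistanceStep_le (hc : 0 < c) (hη : 4 * (η : ℝ) ≤ c)
    (hlin : ∀ i j : Fin n, i ≠ j → ApproximatesLinearOn M ((c / 2) • coordDiff i j)
      (closedBall (Pi.single i 1 - Pi.single j 1) r) η)
    {t t' : Fin n → Fin n → ℝ} (ht : t ∈ hollowSymmBall n (c * r / 2))
    (ht' : t' ∈ hollowSymmBall n (c * r / 2)) :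
    dist (equidistanceStep M c d t) (equidistanceStep M c d t') ≤ 2⁻¹ * dist t t' := by
  refine (dist_pi_le_iff (by positivity)).2 fun i => (dist_pi_le_iff (by positivity)).2 fun j => ?_
  rcases eq_or_ne i j with rfl | hij
  · simp only [equidistanceStep, ↓reduceIte, dist_self]
    positivity
  have happrox := hlin i j hij _ (perturbedVertex_sub_mem_closedBall hc ht.2.2 i j)
    _ (perturbedVertex_sub_mem_closedBall hc ht'.2.2 i j)
  rw [FunLike.coe_smul, Pi.smul_apply, smul_eq_mul,
    coordDiff_perturbedVertex_sub_sub hc.ne' ht.1 ht.2.1 ht'.1 ht'.2.1, Real.norm_eq_abs] at happrox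
  calc dist (equidistanceStep M c d t i j) (equidistanceStep M c d t' i j)
      = |M (perturbedVertex c t i - perturbedVertex c t j)
          - M (perturbedVertex c t' i - perturbedVertex c t' j) - (t i j - t' i j)| := by
        simp only [equidistanceStep, if_neg hij, Real.dist_eq]
        rw [← abs_neg]
        ring_nf
    _ ≤ η * (2 / c * ‖t - t'‖) :=
        happrox.trans (by gcongr; exact norm_perturbedVertex_sub_sub_le hc t t' i j)
    _ ≤ c / 4 * (2 / c * ‖t - t'‖) := by gcongr; linarith
    _ = 2⁻¹ * dist t t' := by rw [dist_eq_norm]; field_simp; ring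

lemma mapsTo_equidistanceStep (hc : 0 < c) (hr : 0 ≤ r) (hη : 4 * (η : ℝ) ≤ c)
    (hM : ∀ x, M (-x) = M x)
    (hlin : ∀ i j : Fin n, i ≠ j → ApproximatesLinearOn M ((c / 2) • coordDiff i j)
      (closedBall (Pi.single i 1 - Pi.single j 1) r) η)
    (hbase : ∀ i j : Fin n, i ≠ j → |M (Pi.single i 1 - Pi.single j 1) - d| ≤ c * r / 4) :
    MapsTo (equidistanceStep M c d) (hollowSymmBall n (c * r / 2))
      (hollowSymmBall n (c * r / 2)) := by
  intro t ht
  refine ⟨fun i j => ?_, fun i => if_pos rfl, ?_⟩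
  · rcases eq_or_ne i j with rfl | hij
    · rfl
    simp only [equidistanceStep, if_neg hij, if_neg hij.symm, ht.1 i j]
    rw [← hM, neg_sub]
  have hstep0 : ‖equidistanceStep M c d 0‖ ≤ c * r / 4 := by
    refine (pi_norm_le_iff_of_nonneg (by positivity)).2 fun i =>
      (pi_norm_le_iff_of_nonneg (by positivity)).2 fun j => ?_
    rcases eq_or_ne i j with rfl | hij
    · simp only [equidistanceStep, ↓reduceIte, norm_zero]
      positivity
    simp only [equidistanceStep, if_neg hij, perturbedVertex_zero, Pi.zero_apply, zero_add,
      Real.norm_eq_abs]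
    rw [abs_sub_comm]
    exact hbase i j hij
  have hlip := dist_equidistanceStep_le (d := d) hc hη hlin ht
    (zero_mem_hollowSymmBall (by positivity))
  rw [dist_eq_norm, dist_zero_right] at hlip
  linarith [norm_le_insert' (equidistanceStep M c d t) (equidistanceStep M c d 0), ht.2.2]

theorem exists_apply_sub_eq_of_approximatesLinearOn (hc : 0 < c) (hr : 0 ≤ r)
    (hη : 4 * (η : ℝ) ≤ c) (hM : ∀ x, M (-x) = M x)
    (hlin : ∀ i j : Fin n, i ≠ j → ApproximatesLinearOn M ((c / 2) • coordDiff i j)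
      (closedBall (Pi.single i 1 - Pi.single j 1) r) η)
    (hbase : ∀ i j : Fin n, i ≠ j → |M (Pi.single i 1 - Pi.single j 1) - d| ≤ c * r / 4) :
    ∃ p : Fin n → Fin n → ℝ, ∀ i j, i ≠ j → M (p i - p j) = d := by
  obtain ⟨t, -, ht⟩ := exists_isFixedPt_of_lipschitzOnWith (isClosed_hollowSymmBall _)
    (zero_mem_hollowSymmBall (by positivity)) (mapsTo_equidistanceStep hc hr hη hM hlin hbase)
    (K := 2⁻¹) (by norm_num) (LipschitzOnWith.of_dist_le_mul fun t ht t' ht' => by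
      simpa using dist_equidistanceStep_le hc hη hlin ht ht')
  refine ⟨perturbedVertex c t, fun i j hij => ?_⟩
  have hij_fixed := congrFun (congrFun ht i) j
  simp only [equidistanceStep, if_neg hij] at hij_fixed
  linarith

end Perturbation

theorem equilateral_near_smooth_symmetric_general (n : ℕ) (hn : 3 ≤ n)
    (N : (Fin n → ℝ) → ℝ) (hN : IsNorm N) (hperm : PermInvariant N)
    (hsmooth : SmoothNorm N) :
    ∃ R : ℝ, 1 < R ∧
      ∀ M : (Fin n → ℝ) → ℝ, IsNorm M →
        (∀ x : Fin n → ℝ, M x ≤ N x ∧ N x ≤ R * M x) →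
        ∃ (p : Fin n → (Fin n → ℝ)) (d : ℝ), 0 < d ∧
          ∀ i j : Fin n, i ≠ j → M (p i - p j) = d := by
  obtain ⟨c, hc, hNc⟩ := hperm.exists_pos_forall_apply_single_sub_single_eq hN (by omega)
  set η : ℝ≥0 := ⟨c / 4, by positivity⟩
  have hη : (η : ℝ) = c / 4 := rfl
  obtain ⟨γ, hγlin, hγ0 : 0 < γ, hγ1⟩ :=
    ((hsmooth.eventually_approximatesLinearOn_coordDiff hN hperm hNc
      (NNReal.coe_pos.1 (by rw [hη]; positivity))).and (eventually_mem_nhdsWithin.and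
        ((eventually_lt_nhds one_pos).filter_mono nhdsWithin_le_nhds))).exists
  refine ⟨(1 - γ / 2)⁻¹, (one_lt_inv₀ (by linarith)).2 (by linarith), fun M hM hMN => ?_⟩
  have hlow : ∀ x, (1 - γ / 2) * N x ≤ M x := fun x => by
    have := (hMN x).2
    rwa [inv_mul_eq_div, le_div_iff₀ (by linarith), mul_comm] at this
  obtain ⟨p, hp⟩ := exists_apply_sub_eq_of_approximatesLinearOn (d := c * (1 - γ / 4)) hc hγ0.le
    (by rw [hη]; linarith) hM.neg
    (fun i j hij => hγlin i j hij M hM (fun x => (hMN x).1) fun x => by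
      nlinarith [hlow x, hN.nonneg x])
    fun i j hij => by
      have hup := (hMN (Pi.single i 1 - Pi.single j 1)).1
      have hlo := hlow (Pi.single i 1 - Pi.single j 1)
      rw [hNc i j hij] at hup hlo
      rw [abs_le]
      constructor <;> nlinarith
  exact ⟨p, _, by nlinarith, hp⟩

/-- For a smooth and symmetric norm `N` on `ℝ^n` (`n ≥ 3`) there exists `R > 1` such that
every norm `M` within (multiplicative) Banach–Mazur distance `R` of `N` admits `n`
pairwise equidistant points. -/
theorem equilateral_near_smooth_symmetric (n : ℕ) (hn : 3 ≤ n)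
    (N : (Fin n → ℝ) → ℝ) (hN : IsNorm N) (hperm : PermInvariant N)
    (huncond : Unconditional N) (hsmooth : SmoothNorm N) :
    ∃ R : ℝ, 1 < R ∧
      ∀ M : (Fin n → ℝ) → ℝ, IsNorm M →
        (∀ x : Fin n → ℝ, M x ≤ N x ∧ N x ≤ R * M x) →
        ∃ (p : Fin n → (Fin n → ℝ)) (d : ℝ), 0 < d ∧
          ∀ i j : Fin n, i ≠ j → M (p i - p j) = d :=
  equilateral_near_smooth_symmetric_general n hn N hN hperm hsmooth
end

section
/- Let n ≥ 3 and let N be a smooth and symmetric norm on ℝ^n with N(e_1) = 1 (hence N(e_i) = 1 for every standard basis vector e_i). Let c > 0 be such that N(c, c, 0, …, 0) = 1, let ε_0 > 0 satisfy N(x + ε_0·y) + N(x − ε_0·y) ≤ 2 + ε_0/(3n) for all x, y with N(x) ≤ 1 and N(y) ≤ 1, and set ε = ε_0/(3n). Then N(c − ε, c − ε, 3ε, 3ε, …, 3ε) ≤ 1. -/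
namespace IsNorm

variable {n : ℕ} {N : (Fin n → ℝ) → ℝ}

lemma map_zero (hN : IsNorm N) : N 0 = 0 := (hN.1 0).2 rfl

lemma map_single (hN : IsNorm N) (i : Fin n) (a : ℝ) :
    N (Pi.single i a) = |a| * N (Pi.single i 1) := by
  rw [← hN.2.1, ← Pi.single_smul, smul_eq_mul, mul_one]

lemma le_sum_abs (hN : IsNorm N) (hone : ∀ i, N (Pi.single i 1) = 1) (x : Fin n → ℝ) :
    N x ≤ ∑ i, |x i| := by
  calc N x = N (∑ i, Pi.single i (x i)) := by rw [Finset.univ_sum_single]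
    _ ≤ ∑ i, N (Pi.single i (x i)) :=
      Finset.le_sum_of_subadditive N hN.map_zero.le hN.2.2 _ _
    _ = ∑ i, |x i| := Finset.sum_congr rfl fun i _ => by rw [hN.map_single, hone, mul_one]

lemma le_card_mul (hN : IsNorm N) (hone : ∀ i, N (Pi.single i 1) = 1) {x : Fin n → ℝ} {M : ℝ}
    (hx : ∀ i, |x i| ≤ M) : N x ≤ n * M :=
  calc N x ≤ ∑ i, |x i| := hN.le_sum_abs hone x
    _ ≤ ∑ _i : Fin n, M := Finset.sum_le_sum fun i _ => hx i
    _ = n * M := by simp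

end IsNorm

lemma PermInvariant.map_single {n : ℕ} {N : (Fin n → ℝ) → ℝ} (hP : PermInvariant N)
    (i j : Fin n) (a : ℝ) : N (Pi.single i a) = N (Pi.single j a) := by
  rw [← hP (Equiv.swap i j) (Pi.single i a)]
  congr 1
  funext k
  simp [Pi.single_apply, Equiv.swap_apply_eq_iff]

namespace Unconditional

variable {n : ℕ} {N : (Fin n → ℝ) → ℝ}

-- Restricting `x` to `p` is the average of `x` and its sign flip off `p`.
lemma map_ite_zero_le (hU : Unconditional N) (hN : IsNorm N) (p : Fin n → Prop)
    [DecidablePred p] (x : Fin n → ℝ) : N (fun i => if p i then x i else 0) ≤ N x := by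
  set flip : Fin n → ℝ := fun i => if p i then 1 else -1
  have hflip : N (fun i => flip i * x i) = N x :=
    hU flip (fun i => by by_cases h : p i <;> simp [flip, h]) x
  have havg : (fun i => if p i then x i else 0) = (2 : ℝ)⁻¹ • (x + fun i => flip i * x i) := by
    funext i
    simp only [flip, Pi.smul_apply, Pi.add_apply, smul_eq_mul]
    split_ifs <;> ring
  calc N (fun i => if p i then x i else 0)
      = 2⁻¹ * N (x + fun i => flip i * x i) := by rw [havg, hN.2.1, abs_of_pos (by norm_num)]
    _ ≤ 2⁻¹ * (N x + N x) := by gcongr; exact (hN.2.2 _ _).trans_eq (by rw [hflip])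
    _ = N x := by ring

lemma abs_apply_le (hU : Unconditional N) (hN : IsNorm N) {i : Fin n}
    (hone : N (Pi.single i 1) = 1) (x : Fin n → ℝ) : |x i| ≤ N x := by
  convert hU.map_ite_zero_le hN (· = i) x using 1
  rw [← mul_one |x i|, ← hone, ← hN.map_single]
  congr 1
  funext j
  by_cases h : j = i <;> simp [h]

end Unconditional

/-- Let `N` be a smooth and symmetric norm on `ℝ^n` (`n ≥ 3`) with `N(e₁) = 1`, let `c > 0`
satisfy `N(c, c, 0, …, 0) = 1`, and let `ε₀ > 0` satisfy
`N(x + ε₀y) + N(x − ε₀y) ≤ 2 + ε₀/(3n)` for all `x, y` in the unit ball. Then with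
`ε = ε₀/(3n)` one has `N(c − ε, c − ε, 3ε, …, 3ε) ≤ 1`. -/
theorem norm_perturbed_diagonal_le_one (n : ℕ) (hn : 3 ≤ n)
    (N : (Fin n → ℝ) → ℝ) (hN : IsNorm N) (hperm : PermInvariant N)
    (huncond : Unconditional N)
    (he : N (Pi.single (⟨0, by omega⟩ : Fin n) 1) = 1)
    (c : ℝ) (hc : 0 < c)
    (hvc : N (fun i => if (i : ℕ) < 2 then c else 0) = 1)
    (ε₀ : ℝ) (hε₀ : 0 < ε₀)
    (hmod : ∀ x y : Fin n → ℝ, N x ≤ 1 → N y ≤ 1 →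
      N (x + ε₀ • y) + N (x - ε₀ • y) ≤ 2 + ε₀ / (3 * n)) :
    N (fun i => if (i : ℕ) < 2 then c - ε₀ / (3 * n) else 3 * (ε₀ / (3 * n))) ≤ 1 := by
  set ε := ε₀ / (3 * n)
  set v : Fin n → ℝ := fun i => if (i : ℕ) < 2 then c else 0
  set u : Fin n → ℝ := fun i => if (i : ℕ) < 2 then -1 else 3
  have hn₀ : (0 : ℝ) < 3 * n := by positivity
  have hε : 0 < ε := by positivity
  have hone (i : Fin n) : N (Pi.single i 1) = 1 := (hperm.map_single i _ 1).trans he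
  have hc₁ : c ≤ 1 := by
    have h := huncond.abs_apply_le hN (hone ⟨0, by omega⟩) v
    rwa [hvc, show v ⟨0, _⟩ = c from if_pos (by simp), abs_of_pos hc] at h
  have hu : N ((3 * n : ℝ)⁻¹ • u) ≤ 1 := by
    have := hN.le_card_mul hone fun i => show |u i| ≤ 3 by simp only [u]; split_ifs <;> norm_num
    rw [hN.2.1, abs_of_pos (inv_pos.2 hn₀), inv_mul_le_iff₀ hn₀]
    linarith
  have hsub : (c + ε) / c ≤ N (v - ε • u) := by
    convert huncond.map_ite_zero_le hN (fun i => (i : ℕ) < 2) (v - ε • u) using 1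
    rw [← mul_one ((c + ε) / c), ← hvc, ← abs_of_pos (by positivity : 0 < (c + ε) / c),
      ← hN.2.1]
    congr 1
    funext i
    simp only [Pi.sub_apply, Pi.smul_apply, smul_eq_mul, v, u]
    split_ifs <;> field_simp <;> ring
  have hgain : 1 + ε ≤ (c + ε) / c := by
    rw [le_div_iff₀ hc]; nlinarith
  have hpair : N (v + ε • u) + N (v - ε • u) ≤ 2 + ε := by
    simpa only [smul_smul, ← div_eq_mul_inv] using hmod v _ hvc.le hu
  have htarget : (fun i : Fin n => if (i : ℕ) < 2 then c - ε else 3 * ε) = v + ε • u := by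
    funext i
    simp only [Pi.add_apply, Pi.smul_apply, smul_eq_mul, v, u]
    split_ifs <;> ring
  rw [htarget]
  linarith
end
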